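/- arXiv:1911.10256 — 5 statements merged into one kernel-verified Lean document; each statement's English description precedes it below -/
import Mathlib

section
/- Let φ : ℝ≥0 → ℝ≥0 be an Orlicz function satisfying Δ^{*p} for all arguments with constant K, i.e. φ(au) ≥ K a^p φ(u) for all a ≥ 1, u ≥ 0. Define r(u) = sup_{0 < t ≤ u} φ(t)/t^p and ψ(u) = ∫₀^u r(t) t^{p-1} dt. Then ψ is an Orlicz function equivalent to φ and u ↦ ψ(u^{1/p}) is convex. -/
/-!
The condition Δ^{*p} says that `t ↦ φ t / t ^ p` is quasi-increasing:
`φ s / s ^ p ≤ K⁻¹ * (φ t / t ^ p)` for `0 < s ≤ t`. Hence its running supremum `r` is monotone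
and agrees with `φ t / t ^ p` up to the factor `K⁻¹`. Because `r` is monotone, the increment of
`ψ` over `[a, b]` lies between `r a * (b ^ p - a ^ p) / p` and `r b * (b ^ p - a ^ p) / p`.
In the variable `x = u ^ p` these bounds say that the slopes of `x ↦ ψ (x ^ (1 / p))` increase,
which is convexity; on `[0, u]` and `[u, 2 u]` they give `ψ u ≤ φ u / (p K)` and
`(2 ^ p - 1) / p * φ u ≤ ψ (2 u)`, which is the equivalence with `φ`.
-/

open Real MeasureTheory Set

theorem convexOn_of_mul_sub_le_sub_le_mul_sub {s : Set ℝ} (hs : Convex ℝ s) {G h : ℝ → ℝ}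
    (hlow : ∀ x ∈ s, ∀ y ∈ s, x < y → h x * (y - x) ≤ G y - G x)
    (hup : ∀ x ∈ s, ∀ y ∈ s, x < y → G y - G x ≤ h y * (y - x)) : ConvexOn ℝ s G := by
  refine convexOn_of_slope_mono_adjacent hs fun hx hz hxy hyz => ?_
  have hy := hs.ordConnected.out hx hz ⟨hxy.le, hyz.le⟩
  calc (G _ - G _) / (_ - _) ≤ h _ := by
        rw [div_le_iff₀ (sub_pos.2 hxy)]; exact hup _ hx _ hy hxy
    _ ≤ (G _ - G _) / (_ - _) := by
        rw [le_div_iff₀ (sub_pos.2 hyz)]; exact hlow _ hy _ hz hyz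

theorem Monotone.intervalIntegrable_mul_rpow {f : ℝ → ℝ} (hf : Monotone f) {p : ℝ} (hp : 0 < p)
    (a b : ℝ) : IntervalIntegrable (fun t => f t * t ^ (p - 1)) volume a b := by
  rw [intervalIntegrable_iff]
  refine (intervalIntegral.intervalIntegrable_rpow' (r := p - 1) (by linarith)).def'.bdd_mul
    (c := max |f (min a b)| |f (max a b)|) hf.measurable.aestronglyMeasurable ?_
  refine (ae_restrict_iff' measurableSet_uIoc).2 (Filter.Eventually.of_forall fun t ht => ?_)
  exact abs_le_max_abs_abs (hf ht.1.le) (hf ht.2)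

theorem integral_rpow_sub_one {p : ℝ} (hp : 0 < p) (a b : ℝ) :
    ∫ t in a..b, t ^ (p - 1) = (b ^ p - a ^ p) / p := by
  rw [integral_rpow (Or.inl (by linarith)), sub_add_cancel]

noncomputable def rpowPrimitive (f : ℝ → ℝ) (p u : ℝ) : ℝ :=
  ∫ t in (0:ℝ)..u, f t * t ^ (p - 1)

@[simp]
theorem rpowPrimitive_zero (f : ℝ → ℝ) (p : ℝ) : rpowPrimitive f p 0 = 0 :=
  intervalIntegral.integral_same

section Monotone

variable {f : ℝ → ℝ} {p : ℝ}

theorem rpowPrimitive_sub (hf : Monotone f) (hp : 0 < p) (a b : ℝ) :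
    rpowPrimitive f p b - rpowPrimitive f p a = ∫ t in a..b, f t * t ^ (p - 1) :=
  intervalIntegral.integral_interval_sub_left (hf.intervalIntegrable_mul_rpow hp 0 b)
    (hf.intervalIntegrable_mul_rpow hp 0 a)

theorem rpowPrimitive_sub_le (hf : Monotone f) (hp : 0 < p) {a b : ℝ} (ha : 0 ≤ a)
    (hab : a ≤ b) :
    rpowPrimitive f p b - rpowPrimitive f p a ≤ f b * ((b ^ p - a ^ p) / p) := by
  rw [rpowPrimitive_sub hf hp, ← integral_rpow_sub_one hp, ← intervalIntegral.integral_const_mul]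
  refine intervalIntegral.integral_mono_on hab (hf.intervalIntegrable_mul_rpow hp a b)
    ((intervalIntegral.intervalIntegrable_rpow' (by linarith)).const_mul _) fun t ht => ?_
  exact mul_le_mul_of_nonneg_right (hf ht.2) (rpow_nonneg (ha.trans ht.1) _)

theorem le_rpowPrimitive_sub (hf : Monotone f) (hp : 0 < p) {a b : ℝ} (ha : 0 ≤ a)
    (hab : a ≤ b) :
    f a * ((b ^ p - a ^ p) / p) ≤ rpowPrimitive f p b - rpowPrimitive f p a := by
  rw [rpowPrimitive_sub hf hp, ← integral_rpow_sub_one hp, ← intervalIntegral.integral_const_mul]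
  refine intervalIntegral.integral_mono_on hab
    ((intervalIntegral.intervalIntegrable_rpow' (by linarith)).const_mul _)
    (hf.intervalIntegrable_mul_rpow hp a b) fun t ht => ?_
  exact mul_le_mul_of_nonneg_right (hf ht.1) (rpow_nonneg (ha.trans ht.1) _)

theorem rpowPrimitive_nonneg (hf : Monotone f) (hp : 0 < p) (hf0 : 0 ≤ f 0) {u : ℝ}
    (hu : 0 ≤ u) : 0 ≤ rpowPrimitive f p u := by
  have h := le_rpowPrimitive_sub hf hp le_rfl hu
  rw [rpowPrimitive_zero, sub_zero, zero_rpow hp.ne', sub_zero] at h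
  exact (mul_nonneg hf0 (div_nonneg (rpow_nonneg hu p) hp.le)).trans h

theorem continuous_rpowPrimitive (hf : Monotone f) (hp : 0 < p) :
    Continuous (rpowPrimitive f p) :=
  intervalIntegral.continuous_primitive (hf.intervalIntegrable_mul_rpow hp) 0

theorem strictMonoOn_rpowPrimitive (hf : Monotone f) (hp : 0 < p) (hpos : ∀ t, 0 < t → 0 < f t) :
    StrictMonoOn (rpowPrimitive f p) (Ici 0) := by
  intro a ha b _ hab
  rw [← sub_pos, rpowPrimitive_sub hf hp]
  refine intervalIntegral.intervalIntegral_pos_of_pos_on (hf.intervalIntegrable_mul_rpow hp a b)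
    (fun t ht => ?_) hab
  have ht0 : 0 < t := lt_of_le_of_lt ha ht.1
  exact mul_pos (hpos t ht0) (rpow_pos_of_pos ht0 _)

theorem convexOn_rpowPrimitive_comp_rpow_inv (hf : Monotone f) (hp : 0 < p) :
    ConvexOn ℝ (Ici 0) fun u => rpowPrimitive f p (u ^ (1 / p)) := by
  have hroot : ∀ x : ℝ, 0 ≤ x → (x ^ (1 / p)) ^ p = x := fun x hx => by
    rw [one_div, rpow_inv_rpow hx hp.ne']
  have hroot_mono : ∀ x y : ℝ, 0 ≤ x → x < y → x ^ (1 / p) ≤ y ^ (1 / p) := fun x y hx hxy =>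
    rpow_le_rpow hx hxy.le (by positivity)
  refine convexOn_of_mul_sub_le_sub_le_mul_sub (convex_Ici 0) (h := fun y => f (y ^ (1 / p)) / p)
    (fun x hx y hy hxy => ?_) (fun x hx y hy hxy => ?_)
  · have h := le_rpowPrimitive_sub hf hp (rpow_nonneg hx _) (hroot_mono x y hx hxy)
    rwa [hroot x hx, hroot y hy, ← mul_div_assoc, ← div_mul_eq_mul_div] at h
  · have h := rpowPrimitive_sub_le hf hp (rpow_nonneg hx _) (hroot_mono x y hx hxy)
    rwa [hroot x hx, hroot y hy, ← mul_div_assoc, ← div_mul_eq_mul_div] at h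

end Monotone

def DeltaStar (φ : ℝ → ℝ) (p K : ℝ) : Prop :=
  ∀ a ≥ (1:ℝ), ∀ u ≥ (0:ℝ), K * a ^ p * φ u ≤ φ (a * u)

/-- The function `r` of the statement; for `u ≤ 0` it is `sSup ∅ = 0`. -/
noncomputable def supRatio (φ : ℝ → ℝ) (p u : ℝ) : ℝ :=
  sSup ((fun t => φ t / t ^ p) '' Ioc 0 u)

section DeltaStar

variable {φ : ℝ → ℝ} {p K : ℝ}

theorem DeltaStar.ratio_le (hΔ : DeltaStar φ p K) (hK : 0 < K) {s t : ℝ} (hs : 0 < s)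
    (hst : s ≤ t) : φ s / s ^ p ≤ K⁻¹ * (φ t / t ^ p) := by
  have ht := hs.trans_le hst
  have h := hΔ (t / s) ((one_le_div hs).2 hst) s hs.le
  rw [div_mul_cancel₀ _ hs.ne', div_rpow ht.le hs.le] at h
  rw [inv_mul_eq_div, div_div, div_le_div_iff₀ (by positivity) (by positivity)]
  calc φ s * (t ^ p * K) = K * (t ^ p / s ^ p) * φ s * s ^ p := by
        field_simp
    _ ≤ φ t * s ^ p := by gcongr

theorem DeltaStar.bddAbove_ratio (hΔ : DeltaStar φ p K) (hK : 0 < K) (t : ℝ) :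
    BddAbove ((fun s => φ s / s ^ p) '' Ioc 0 t) :=
  ⟨K⁻¹ * (φ t / t ^ p), by
    rintro _ ⟨s, hs, rfl⟩
    exact hΔ.ratio_le hK hs.1 hs.2⟩

theorem supRatio_of_nonpos {t : ℝ} (ht : t ≤ 0) : supRatio φ p t = 0 := by
  simp [supRatio, Ioc_eq_empty_of_le ht]

theorem DeltaStar.supRatio_le (hΔ : DeltaStar φ p K) (hK : 0 < K) {t : ℝ} (ht : 0 < t) :
    supRatio φ p t ≤ K⁻¹ * (φ t / t ^ p) :=
  csSup_le ((nonempty_Ioc.2 ht).image _) fun _ ⟨_, hs, hs_eq⟩ =>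
    hs_eq ▸ hΔ.ratio_le hK hs.1 hs.2

theorem DeltaStar.le_supRatio (hΔ : DeltaStar φ p K) (hK : 0 < K) {t : ℝ} (ht : 0 < t) :
    φ t / t ^ p ≤ supRatio φ p t :=
  le_csSup (hΔ.bddAbove_ratio hK t) ⟨t, ⟨ht, le_rfl⟩, rfl⟩

theorem DeltaStar.supRatio_pos (hΔ : DeltaStar φ p K) (hK : 0 < K)
    (hφ : ∀ t, 0 < t → 0 < φ t) {t : ℝ} (ht : 0 < t) : 0 < supRatio φ p t :=
  (div_pos (hφ t ht) (rpow_pos_of_pos ht p)).trans_le (hΔ.le_supRatio hK ht)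

theorem DeltaStar.monotone_supRatio (hΔ : DeltaStar φ p K) (hK : 0 < K)
    (hφ : ∀ t, 0 < t → 0 ≤ φ t) : Monotone (supRatio φ p) := by
  intro s t hst
  rcases le_or_gt s 0 with hs | hs
  · rw [supRatio_of_nonpos hs]
    rcases le_or_gt t 0 with ht | ht
    · rw [supRatio_of_nonpos ht]
    · exact (div_nonneg (hφ t ht) (rpow_nonneg ht.le p)).trans (hΔ.le_supRatio hK ht)
  · exact csSup_le_csSup (hΔ.bddAbove_ratio hK t) ((nonempty_Ioc.2 hs).image _)
      (image_mono (Ioc_subset_Ioc_right hst))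

theorem DeltaStar.rpowPrimitive_supRatio_le (hΔ : DeltaStar φ p K) (hK : 0 < K) (hp : 0 < p)
    (hφ : ∀ t, 0 < t → 0 ≤ φ t) {v : ℝ} (hv : 0 < v) :
    rpowPrimitive (supRatio φ p) p v ≤ φ v / (p * K) := by
  have h := rpowPrimitive_sub_le (hΔ.monotone_supRatio hK hφ) hp le_rfl hv.le
  rw [rpowPrimitive_zero, sub_zero, zero_rpow hp.ne', sub_zero] at h
  calc rpowPrimitive (supRatio φ p) p v ≤ supRatio φ p v * (v ^ p / p) := h
    _ ≤ K⁻¹ * (φ v / v ^ p) * (v ^ p / p) := by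
        gcongr
        exact hΔ.supRatio_le hK hv
    _ = φ v / (p * K) := by
        field_simp [(rpow_pos_of_pos hv p).ne']

theorem DeltaStar.le_rpowPrimitive_supRatio_two_mul (hΔ : DeltaStar φ p K) (hK : 0 < K)
    (hp : 0 < p) (hφ : ∀ t, 0 < t → 0 ≤ φ t) {u : ℝ} (hu : 0 < u) :
    φ u * ((2 ^ p - 1) / p) ≤ rpowPrimitive (supRatio φ p) p (2 * u) := by
  have hmono := hΔ.monotone_supRatio hK hφ
  have hF_nonneg : 0 ≤ rpowPrimitive (supRatio φ p) p u :=
    rpowPrimitive_nonneg hmono hp (supRatio_of_nonpos le_rfl).ge hu.le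
  have h := le_rpowPrimitive_sub hmono hp hu.le (by linarith : u ≤ 2 * u)
  rw [mul_rpow zero_le_two hu.le] at h
  calc φ u * ((2 ^ p - 1) / p) = φ u / u ^ p * ((2 ^ p * u ^ p - u ^ p) / p) := by
        field_simp [(rpow_pos_of_pos hu p).ne']
    _ ≤ supRatio φ p u * ((2 ^ p * u ^ p - u ^ p) / p) := by
        gcongr
        · exact div_nonneg (sub_nonneg.2 (le_mul_of_one_le_left (rpow_nonneg hu.le p)
            (one_le_rpow one_le_two hp.le))) hp.le
        · exact hΔ.le_supRatio hK hu
    _ ≤ rpowPrimitive (supRatio φ p) p (2 * u) := by linarith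

theorem DeltaStar.tendsto_rpowPrimitive_supRatio_atTop (hΔ : DeltaStar φ p K) (hK : 0 < K)
    (hp : 0 < p) (hφ : ∀ t, 0 < t → 0 ≤ φ t) (htop : Filter.Tendsto φ Filter.atTop Filter.atTop) :
    Filter.Tendsto (rpowPrimitive (supRatio φ p) p) Filter.atTop Filter.atTop := by
  refine Filter.tendsto_atTop_mono' _ ?_ (((htop.comp (Filter.tendsto_id.atTop_div_const
    two_pos)).atTop_mul_const (div_pos (sub_pos.2 (one_lt_rpow one_lt_two hp)) hp)))
  filter_upwards [Filter.eventually_gt_atTop 0] with v hv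
  simpa [mul_div_cancel₀] using hΔ.le_rpowPrimitive_supRatio_two_mul hK hp hφ (half_pos hv)

theorem DeltaStar.exists_equiv_rpowPrimitive_supRatio (hΔ : DeltaStar φ p K) (hK : 0 < K)
    (hp : 0 < p) (hφ0 : φ 0 = 0) (hφ : ∀ t, 0 < t → 0 < φ t) :
    ∃ K₁ ≥ (1:ℝ), ∀ u ≥ (0:ℝ), K₁⁻¹ * rpowPrimitive (supRatio φ p) p (2⁻¹ * u) ≤ φ u ∧
      φ u ≤ K₁ * rpowPrimitive (supRatio φ p) p (2 * u) := by
  set F := rpowPrimitive (supRatio φ p) p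
  have hφ_nonneg : ∀ t, 0 < t → 0 ≤ φ t := fun t ht => (hφ t ht).le
  have hmono := hΔ.monotone_supRatio hK hφ_nonneg
  have hF_nonneg : ∀ u, 0 ≤ u → 0 ≤ F u :=
    fun u hu => rpowPrimitive_nonneg hmono hp (supRatio_of_nonpos le_rfl).ge hu
  have hFmono : MonotoneOn F (Ici 0) :=
    (strictMonoOn_rpowPrimitive hmono hp fun t ht => hΔ.supRatio_pos hK hφ ht).monotoneOn
  have h2p : 0 < (2:ℝ) ^ p - 1 := sub_pos.2 (one_lt_rpow one_lt_two hp)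
  set K₁ := max 1 (max (p * K)⁻¹ (p / (2 ^ p - 1)))
  have hK₁ : 0 < K₁ := one_pos.trans_le (le_max_left _ _)
  refine ⟨K₁, le_max_left _ _, fun u hu => ?_⟩
  rcases (show (0:ℝ) ≤ u from hu).eq_or_lt with rfl | hu
  · simp [F, hφ0]
  constructor
  · calc K₁⁻¹ * F (2⁻¹ * u) ≤ (p * K) * F u := by
          gcongr
          · exact hF_nonneg _ (by positivity)
          · exact inv_le_of_inv_le₀ (by positivity) (le_max_of_le_right (le_max_left _ _))
          · exact hFmono (mem_Ici.2 (by positivity)) (mem_Ici.2 hu.le) (by linarith)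
      _ ≤ (p * K) * (φ u / (p * K)) := by
          gcongr
          exact hΔ.rpowPrimitive_supRatio_le hK hp hφ_nonneg hu
      _ = φ u := by field_simp
  · calc φ u = p / (2 ^ p - 1) * (φ u * ((2 ^ p - 1) / p)) := by field_simp
      _ ≤ K₁ * F (2 * u) :=
          mul_le_mul (le_max_of_le_right (le_max_right _ _))
            (hΔ.le_rpowPrimitive_supRatio_two_mul hK hp hφ_nonneg hu)
            (mul_nonneg (hφ_nonneg u hu) (div_nonneg h2p.le hp.le)) hK₁.le

end DeltaStar

theorem stmt_9_general (φ : ℝ → ℝ) (p : ℝ) (hp : 0 < p)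
    (hφ0 : φ 0 = 0) (hmono : StrictMonoOn φ (Set.Ici 0))
    (htop : Filter.Tendsto φ Filter.atTop Filter.atTop)
    (K : ℝ) (hK : 0 < K)
    (hΔ : ∀ a ≥ (1:ℝ), ∀ u ≥ (0:ℝ), K * a ^ p * φ u ≤ φ (a * u))
    (r ψ : ℝ → ℝ)
    (hr : ∀ u > (0:ℝ), r u = sSup ((fun t => φ t / t ^ p) '' Set.Ioc 0 u))
    (hψ : ∀ u ≥ (0:ℝ), ψ u = ∫ t in (0:ℝ)..u, r t * t ^ (p - 1)) :
    (ψ 0 = 0 ∧ StrictMonoOn ψ (Set.Ici 0) ∧ ContinuousOn ψ (Set.Ici 0) ∧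
      Filter.Tendsto ψ Filter.atTop Filter.atTop) ∧
    (∃ K₁ ≥ (1:ℝ), ∃ K₂ ≥ (1:ℝ), ∀ u ≥ (0:ℝ),
      K₁⁻¹ * ψ (K₂⁻¹ * u) ≤ φ u ∧ φ u ≤ K₁ * ψ (K₂ * u)) ∧
    ConvexOn ℝ (Set.Ici 0) (fun u => ψ (u ^ (1 / p))) := by
  have hφ : ∀ t, 0 < t → 0 < φ t := fun t ht => hφ0 ▸ hmono self_mem_Ici (mem_Ici.2 ht.le) ht
  have hφ_nonneg : ∀ t, 0 < t → 0 ≤ φ t := fun t ht => (hφ t ht).le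
  have hΔ : DeltaStar φ p K := hΔ
  have hr_mono := hΔ.monotone_supRatio hK hφ_nonneg
  have hψ_eq : EqOn ψ (rpowPrimitive (supRatio φ p) p) (Ici 0) := fun u hu => by
    rw [hψ u hu, rpowPrimitive]
    refine intervalIntegral.integral_congr_ae (Filter.Eventually.of_forall fun t ht => ?_)
    rw [uIoc_of_le hu] at ht
    rw [hr t ht.1, supRatio]
  obtain ⟨K₁, hK₁, hequiv⟩ := hΔ.exists_equiv_rpowPrimitive_supRatio hK hp hφ0 hφ
  refine ⟨⟨(hψ_eq self_mem_Ici).trans (rpowPrimitive_zero _ _),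
      (strictMonoOn_rpowPrimitive hr_mono hp fun t ht => hΔ.supRatio_pos hK hφ ht).congr
        hψ_eq.symm,
      (continuous_rpowPrimitive hr_mono hp).continuousOn.congr hψ_eq,
      (hΔ.tendsto_rpowPrimitive_supRatio_atTop hK hp hφ_nonneg htop).congr' ?_⟩,
    ⟨K₁, hK₁, 2, one_le_two, fun u hu => ?_⟩,
    (convexOn_rpowPrimitive_comp_rpow_inv hr_mono hp).congr
      fun u hu => (hψ_eq (rpow_nonneg hu _)).symm⟩
  · filter_upwards [Filter.eventually_ge_atTop 0] with u hu using (hψ_eq hu).symm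
  · rw [hψ_eq (mem_Ici.2 (by positivity)), hψ_eq (mem_Ici.2 (by positivity))]
    exact hequiv u hu

theorem stmt_9 (φ : ℝ → ℝ) (p : ℝ) (hp : 0 < p)
    (hφ0 : φ 0 = 0) (hmono : StrictMonoOn φ (Set.Ici 0))
    (hcont : ContinuousOn φ (Set.Ici 0))
    (htop : Filter.Tendsto φ Filter.atTop Filter.atTop)
    (K : ℝ) (hK : 0 < K)
    (hΔ : ∀ a ≥ (1:ℝ), ∀ u ≥ (0:ℝ), K * a ^ p * φ u ≤ φ (a * u))
    (r ψ : ℝ → ℝ)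
    (hr : ∀ u > (0:ℝ), r u = sSup ((fun t => φ t / t ^ p) '' Set.Ioc 0 u))
    (hψ : ∀ u ≥ (0:ℝ), ψ u = ∫ t in (0:ℝ)..u, r t * t ^ (p - 1)) :
    (ψ 0 = 0 ∧ StrictMonoOn ψ (Set.Ici 0) ∧ ContinuousOn ψ (Set.Ici 0) ∧
      Filter.Tendsto ψ Filter.atTop Filter.atTop) ∧
    (∃ K₁ ≥ (1:ℝ), ∃ K₂ ≥ (1:ℝ), ∀ u ≥ (0:ℝ),
      K₁⁻¹ * ψ (K₂⁻¹ * u) ≤ φ u ∧ φ u ≤ K₁ * ψ (K₂ * u)) ∧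
    ConvexOn ℝ (Set.Ici 0) (fun u => ψ (u ^ (1 / p))) :=
  stmt_9_general φ p hp hφ0 hmono htop K hK hΔ r ψ hr hψ
end

section
/- Let 1 < p < ∞, 1/p + 1/q = 1, and let φ be a convex Orlicz function. Then φ satisfies condition Δ^{*p} for all arguments if and only if its Young conjugate φ* satisfies condition Δ^q for all arguments. -/
open Real ENNReal

private lemma pq_facts {p q : ℝ} (hp : 1 < p) (hpq : 1/p + 1/q = 1) :
    1 < q ∧ p*(q-1) = q ∧ q*(p-1) = p ∧ (p-1)*(q-1) = 1 := by
  have hp0 : 0 < p := lt_trans one_pos hp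
  have h2 : 0 < 1 - 1/p := by
    have : 1/p < 1 := by rw [div_lt_one hp0]; exact hp
    linarith
  have hq0 : 0 < q := by
    have h1 : 0 < 1/q := by linarith
    exact one_div_pos.mp h1
  have key : q + p = p * q := by
    field_simp at hpq
    linarith
  refine ⟨by nlinarith, by nlinarith, by nlinarith, by nlinarith⟩

private lemma support_bound (φ : ℝ → ℝ)
    (hmono : StrictMonoOn φ (Set.Ici 0)) (hconv : ConvexOn ℝ (Set.Ici 0) φ)
    {u ε : ℝ} (hu : 0 < u) (hε : 0 < ε) {w : ℝ} (hw : 0 ≤ w) :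
    ((φ (u+ε) - φ u)/ε) * w - φ w ≤
      ((φ (u+ε) - φ u)/ε) * u - φ u + (φ (u+ε) - φ u) := by
  set t : ℝ := (φ (u+ε) - φ u)/ε with ht
  have hmo := hmono.monotoneOn
  have hu' : u ∈ Set.Ici (0:ℝ) := le_of_lt hu
  have huε : u + ε ∈ Set.Ici (0:ℝ) := Set.mem_Ici.mpr (by positivity)
  have hδ : 0 ≤ φ (u+ε) - φ u := by
    have := hmo hu' huε (by linarith)
    linarith
  have ht0 : 0 ≤ t := by positivity
  have htε : t * ε = φ (u+ε) - φ u := by rw [ht]; field_simp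
  rcases lt_trichotomy w u with hlt | heq | hgt
  · have hs := hconv.slope_mono_adjacent (Set.mem_Ici.mpr hw) huε hlt (by linarith)
    have h2 : ((u+ε) - u) = ε := by ring
    rw [h2] at hs
    have h3 : φ u - φ w ≤ t * (u - w) := by
      rw [ht]
      have := (div_le_div_iff₀ (by linarith) hε).mp hs
      nlinarith
    linarith
  · subst heq; linarith
  · rcases le_or_gt w (u + ε) with hle | hgt2
    · have h1 : φ u ≤ φ w := hmo hu' (Set.mem_Ici.mpr hw) (le_of_lt hgt)
      have h2 : t * w ≤ t * (u + ε) := mul_le_mul_of_nonneg_left hle ht0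
      nlinarith
    · have hs := hconv.slope_mono_adjacent hu' (Set.mem_Ici.mpr hw) (by linarith) hgt2
      have h2 : ((u+ε) - u) = ε := by ring
      rw [h2] at hs
      have h3 : t * (w - (u+ε)) ≤ φ w - φ (u+ε) := by
        rw [ht]
        have := (div_le_div_iff₀ hε (by linarith)).mp hs
        nlinarith
      nlinarith

theorem stmt_11 (φ : ℝ → ℝ) (p q : ℝ) (hp : 1 < p) (hpq : 1 / p + 1 / q = 1)
    (hφ0 : φ 0 = 0) (hmono : StrictMonoOn φ (Set.Ici 0))
    (hcont : ContinuousOn φ (Set.Ici 0))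
    (htop : Filter.Tendsto φ Filter.atTop Filter.atTop)
    (hconv : ConvexOn ℝ (Set.Ici 0) φ)
    (φstar : ℝ → ℝ≥0∞)
    (hstar : ∀ v, φstar v = ⨆ w : Set.Ici (0:ℝ), ENNReal.ofReal (v * w - φ w)) :
    (∃ K > (0:ℝ), ∀ a ≥ (1:ℝ), ∀ u ≥ (0:ℝ), K * a ^ p * φ u ≤ φ (a * u)) ↔
    (∃ K > (0:ℝ), ∀ a ≥ (1:ℝ), ∀ u ≥ (0:ℝ),
      φstar (a * u) ≤ ENNReal.ofReal (K * a ^ q) * φstar u) := by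
  obtain ⟨hq1, hpq1, hqp1, hpq2⟩ := pq_facts hp hpq
  have hp0 : 0 < p := lt_trans one_pos hp
  have hq0 : 0 < q := lt_trans one_pos hq1
  have hφnn : ∀ x ≥ (0:ℝ), 0 ≤ φ x := by
    intro x hx
    have := hmono.monotoneOn (Set.mem_Ici.mpr le_rfl) (Set.mem_Ici.mpr hx) hx
    linarith
  constructor
  · rintro ⟨K, hK, hΔ⟩
    have hφ1 : 0 < φ 1 := by
      have := hmono (Set.mem_Ici.mpr le_rfl) (Set.mem_Ici.mpr zero_le_one) one_pos
      linarith
    have hK1 : K ≤ 1 := by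
      have h1 := hΔ 1 le_rfl 1 zero_le_one
      rw [Real.one_rpow, one_mul, mul_one] at h1
      nlinarith
    set C : ℝ := K ^ (1 - q) with hC
    have hC0 : 0 < C := Real.rpow_pos_of_pos hK _
    refine ⟨C, hC0, fun a ha v hv => ?_⟩
    have ha0 : 0 < a := lt_of_lt_of_le one_pos ha
    have hKa : 1 ≤ a / K := (one_le_div hK).mpr (le_trans hK1 ha)
    have hKa0 : 0 ≤ a / K := by positivity
    set b : ℝ := (a / K) ^ (q - 1) with hbdef
    have hb1 : 1 ≤ b := by
      calc (1:ℝ) = (a/K) ^ (0:ℝ) := (Real.rpow_zero _).symm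
        _ ≤ b := Real.rpow_le_rpow_of_exponent_le hKa (by linarith)
    have hb0 : 0 < b := lt_of_lt_of_le one_pos hb1
    have hbp1 : b ^ (p - 1) = a / K := by
      rw [hbdef, ← Real.rpow_mul hKa0]
      have : (q - 1) * (p - 1) = 1 := by linarith [hpq2]
      rw [this, Real.rpow_one]
    have hbp : b ^ p = (a / K) * b := by
      have h1 : b ^ ((p-1) + 1) = b ^ (p-1) * b ^ (1:ℝ) := Real.rpow_add hb0 _ _
      have h2 : (p - 1) + 1 = p := by ring
      rw [h2, Real.rpow_one, hbp1] at h1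
      exact h1
    have hKb : K * b ^ p = a * b := by
      rw [hbp]
      field_simp
    have hbq : b ^ p = (a / K) ^ q := by
      rw [hbdef, ← Real.rpow_mul hKa0]
      congr 1
      linear_combination hpq1
    have hCb : K * b ^ p = C * a ^ q := by
      rw [hbq, Real.div_rpow (le_of_lt ha0) (le_of_lt hK), hC,
        Real.rpow_sub hK, Real.rpow_one]
      have hKq : (0:ℝ) < K ^ q := Real.rpow_pos_of_pos hK q
      field_simp
    rw [hstar (a * v)]
    apply iSup_le
    rintro ⟨w, hw⟩
    have hw' : (0:ℝ) ≤ w := hw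
    set s : ℝ := w / b with hsdef
    have hs : 0 ≤ s := by positivity
    have hws : w = b * s := by rw [hsdef]; field_simp
    have hΔb := hΔ b hb1 s hs
    have haw : a * v * w = (C * a ^ q) * (v * s) := by
      rw [hws, ← hCb, hKb]; ring
    have hφw : (C * a ^ q) * φ s ≤ φ w := by
      rw [hws, ← hCb]; exact hΔb
    have hreal : a * v * w - φ w ≤ (C * a ^ q) * (v * s - φ s) := by
      have hexp : (C * a ^ q) * (v * s - φ s)
          = (C * a ^ q) * (v * s) - (C * a ^ q) * φ s := by ring
      rw [hexp]
      linarith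
    calc ENNReal.ofReal (a * v * ↑(⟨w, hw⟩ : Set.Ici (0:ℝ)) - φ ↑(⟨w, hw⟩ : Set.Ici (0:ℝ)))
        = ENNReal.ofReal (a * v * w - φ w) := rfl
      _ ≤ ENNReal.ofReal ((C * a ^ q) * (v * s - φ s)) := ENNReal.ofReal_le_ofReal hreal
      _ = ENNReal.ofReal (C * a ^ q) * ENNReal.ofReal (v * s - φ s) :=
          ENNReal.ofReal_mul (by positivity)
      _ ≤ ENNReal.ofReal (C * a ^ q) * φstar v := by
          apply mul_le_mul_right
          rw [hstar v]
          exact le_iSup (fun w : Set.Ici (0:ℝ) => ENNReal.ofReal (v * ↑w - φ ↑w)) ⟨s, hs⟩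
  · rintro ⟨K0, hK0, hΔ0⟩
    set K : ℝ := max K0 1 with hKdef
    have hK1 : 1 ≤ K := le_max_right _ _
    have hK : 0 < K := lt_of_lt_of_le one_pos hK1
    have hΔ : ∀ a ≥ (1:ℝ), ∀ v ≥ (0:ℝ),
        φstar (a * v) ≤ ENNReal.ofReal (K * a ^ q) * φstar v := by
      intro a ha v hv
      refine le_trans (hΔ0 a ha v hv) (mul_le_mul_left (ENNReal.ofReal_le_ofReal ?_) _)
      have haq : (0:ℝ) ≤ a ^ q := Real.rpow_nonneg (by linarith) q
      have : K0 ≤ K := le_max_left _ _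
      nlinarith
    refine ⟨K ^ (-p), Real.rpow_pos_of_pos hK _, fun a ha u hu => ?_⟩
    have ha0 : 0 < a := lt_of_lt_of_le one_pos ha
    rcases eq_or_lt_of_le hu with h0 | hu0
    · rw [← h0, mul_zero, hφ0, mul_zero]
    rcases le_or_gt a K with haK | haK
    · have h1 : φ u ≤ φ (a * u) := by
        apply hmono.monotoneOn (Set.mem_Ici.mpr hu) (Set.mem_Ici.mpr (by positivity))
        nlinarith
      have h2 : K ^ (-p) * a ^ p ≤ 1 := by
        have hap : a ^ p ≤ K ^ p := Real.rpow_le_rpow (by linarith) haK (le_of_lt hp0)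
        have hKp : (0:ℝ) < K ^ p := Real.rpow_pos_of_pos hK p
        have hneg : K ^ (-p) = (K ^ p)⁻¹ := Real.rpow_neg (le_of_lt hK) p
        rw [hneg]
        rw [inv_mul_le_iff₀ hKp]
        linarith
      have h3 : (0:ℝ) ≤ φ u := hφnn u hu
      nlinarith [Real.rpow_pos_of_pos hK (-p), Real.rpow_pos_of_pos ha0 p]
    · -- K < a
      have hKa : 1 ≤ a / K := (one_le_div hK).mpr (le_of_lt haK)
      have hKa0 : 0 ≤ a / K := by positivity
      set c : ℝ := (a / K) ^ (p - 1) with hcdef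
      have hc1 : 1 ≤ c := by
        calc (1:ℝ) = (a/K) ^ (0:ℝ) := (Real.rpow_zero _).symm
          _ ≤ c := Real.rpow_le_rpow_of_exponent_le hKa (by linarith)
      have hc0 : 0 < c := lt_of_lt_of_le one_pos hc1
      have hcq1 : c ^ (q - 1) = a / K := by
        rw [hcdef, ← Real.rpow_mul hKa0]
        have : (p - 1) * (q - 1) = 1 := hpq2
        rw [this, Real.rpow_one]
      have hcq : c ^ q = (a / K) * c := by
        have h1 : c ^ ((q-1) + 1) = c ^ (q-1) * c ^ (1:ℝ) := Real.rpow_add hc0 _ _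
        have h2 : (q - 1) + 1 = q := by ring
        rw [h2, Real.rpow_one, hcq1] at h1
        rw [h1]
      have hKc : K * c ^ q = a * c := by
        rw [hcq]; field_simp
      have hcp : c ^ q = (a / K) ^ p := by
        rw [hcdef, ← Real.rpow_mul hKa0]
        congr 1
        linear_combination hqp1
      set M : ℝ := K ^ ((1:ℝ) - p) * a ^ p with hMdef
      have hM0 : 0 < M := by
        have := Real.rpow_pos_of_pos hK (1-p)
        have := Real.rpow_pos_of_pos ha0 p
        positivity
      have hMc : K * c ^ q = M := by
        rw [hcp, Real.div_rpow (le_of_lt ha0) (le_of_lt hK), hMdef,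
          Real.rpow_sub hK, Real.rpow_one]
        have hKp : (0:ℝ) < K ^ p := Real.rpow_pos_of_pos hK p
        field_simp
      have key : ∀ ε > (0:ℝ), M * (φ u - (φ (u+ε) - φ u)) ≤ φ (a * u) := by
        intro ε hε
        set t : ℝ := (φ (u+ε) - φ u)/ε with htdef
        have hδ : 0 ≤ φ (u+ε) - φ u := by
          have hmem2 : u + ε ∈ Set.Ici (0:ℝ) := Set.mem_Ici.mpr (by positivity)
          have h := hmono.monotoneOn (Set.mem_Ici.mpr (le_of_lt hu0)) hmem2
            (by linarith : u ≤ u + ε)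
          linarith
        have ht0 : 0 ≤ t := by positivity
        have hut : φ u ≤ u * t := by
          have hs := hconv.slope_mono_adjacent (Set.mem_Ici.mpr le_rfl)
            (Set.mem_Ici.mpr (by positivity : (0:ℝ) ≤ u + ε)) hu0 (by linarith)
          have h2 : ((u+ε) - u) = ε := by ring
          rw [h2, hφ0, sub_zero, sub_zero] at hs
          -- hs : φ u / u ≤ (φ (u+ε) - φ u) / ε = t
          have hmul := (div_le_div_iff₀ hu0 hε).mp hs
          have hrw : u * t = ((φ (u+ε) - φ u) * u) / ε := by rw [htdef]; ring
          rw [hrw, le_div_iff₀ hε]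
          nlinarith
        have hstar_t : φstar t ≤ ENNReal.ofReal (u * t - φ u + (φ (u+ε) - φ u)) := by
          rw [hstar t]
          apply iSup_le
          rintro ⟨w, hw⟩
          apply ENNReal.ofReal_le_ofReal
          have hsb := support_bound φ hmono hconv hu0 hε (Set.mem_Ici.mp hw)
          rw [← htdef] at hsb
          have hcoe : ((⟨w, hw⟩ : Set.Ici (0:ℝ)) : ℝ) = w := rfl
          rw [hcoe]
          linarith [hsb]
        have h1 : ENNReal.ofReal (M * (u * t) - φ (a * u)) ≤ φstar (c * t) := by
          rw [hstar (c * t)]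
          have harg : M * (u * t) = (c * t) * (a * u) := by
            rw [← hMc, hKc]; ring
          rw [harg]
          exact le_iSup (fun w : Set.Ici (0:ℝ) =>
            ENNReal.ofReal ((c * t) * ↑w - φ ↑w)) ⟨a * u, Set.mem_Ici.mpr (by positivity)⟩
        have h2 : φstar (c * t) ≤ ENNReal.ofReal (M * (u * t - φ u + (φ (u+ε) - φ u))) := by
          calc φstar (c * t) ≤ ENNReal.ofReal (K * c ^ q) * φstar t := hΔ c hc1 t ht0
            _ ≤ ENNReal.ofReal M * ENNReal.ofReal (u * t - φ u + (φ (u+ε) - φ u)) := by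
                rw [hMc]; exact mul_le_mul_right hstar_t _
            _ = ENNReal.ofReal (M * (u * t - φ u + (φ (u+ε) - φ u))) :=
                (ENNReal.ofReal_mul (le_of_lt hM0)).symm
        have h3 := le_trans h1 h2
        have hrhs : 0 ≤ M * (u * t - φ u + (φ (u+ε) - φ u)) :=
          mul_nonneg (le_of_lt hM0) (by linarith)
        have h4 : M * (u * t) - φ (a * u) ≤ M * (u * t - φ u + (φ (u+ε) - φ u)) :=
          (ENNReal.ofReal_le_ofReal_iff hrhs).mp h3
        have hexp : M * (u * t - φ u + (φ (u+ε) - φ u))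
            = M * (u * t) - M * (φ u - (φ (u+ε) - φ u)) := by ring
        linarith
      -- limit as ε → 0⁺
      have hcw : Filter.Tendsto (fun ε : ℝ => φ (u + ε)) (nhdsWithin 0 (Set.Ioi 0))
          (nhds (φ u)) := by
        have hc : ContinuousWithinAt φ (Set.Ici 0) u := hcont u (le_of_lt hu0)
        have hmap : Filter.Tendsto (fun ε : ℝ => u + ε) (nhdsWithin 0 (Set.Ioi 0))
            (nhdsWithin u (Set.Ici 0)) := by
          rw [tendsto_nhdsWithin_iff]
          constructor
          · have h0 : Filter.Tendsto (fun ε : ℝ => u + ε) (nhds 0) (nhds (u + 0)) :=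
              (continuous_const.add continuous_id).tendsto 0
            rw [add_zero] at h0
            exact h0.mono_left nhdsWithin_le_nhds
          · filter_upwards [self_mem_nhdsWithin] with ε hε
            have : (0:ℝ) < ε := hε
            exact Set.mem_Ici.mpr (by positivity)
        exact hc.tendsto.comp hmap
      have htend : Filter.Tendsto (fun ε : ℝ => M * (φ u - (φ (u+ε) - φ u)))
          (nhdsWithin 0 (Set.Ioi 0)) (nhds (M * φ u)) := by
        have h0 : Filter.Tendsto (fun ε : ℝ => M * (φ u - (φ (u+ε) - φ u)))
            (nhdsWithin 0 (Set.Ioi 0)) (nhds (M * (φ u - (φ u - φ u)))) :=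
          Filter.Tendsto.mul tendsto_const_nhds
            (Filter.Tendsto.sub tendsto_const_nhds (hcw.sub tendsto_const_nhds))
        simpa using h0
      have hfin : M * φ u ≤ φ (a * u) :=
        le_of_tendsto htend (by
          filter_upwards [self_mem_nhdsWithin] with ε hε
          exact key ε hε)
      have hMK : K ^ (-p) * a ^ p ≤ M := by
        rw [hMdef]
        have h5 : K ^ (-p) ≤ K ^ ((1:ℝ) - p) :=
          Real.rpow_le_rpow_of_exponent_le hK1 (by linarith)
        have hap : (0:ℝ) ≤ a ^ p := Real.rpow_nonneg (le_of_lt ha0) p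
        exact mul_le_mul_of_nonneg_right h5 hap
      have hφu : (0:ℝ) ≤ φ u := hφnn u hu
      exact le_trans (mul_le_mul_of_nonneg_right hMK hφu) hfin
end

section
/- Let p > 0 and suppose ψ : ℝ≥0 → ℝ≥0 is an Orlicz function such that u ↦ ψ(u^{1/p}) is convex. Then the function u ↦ ψ^{-1}(u^p)/u is nonincreasing on (0,∞), where ψ^{-1} is the inverse of ψ. -/
open Real

theorem stmt_13 (ψ : ℝ → ℝ) (p : ℝ) (hp : 0 < p)
    (hψ0 : ψ 0 = 0) (hmono : StrictMonoOn ψ (Set.Ici 0))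
    (hcont : ContinuousOn ψ (Set.Ici 0))
    (htop : Filter.Tendsto ψ Filter.atTop Filter.atTop)
    (hconv : ConvexOn ℝ (Set.Ici 0) (fun u => ψ (u ^ (1 / p))))
    (ψinv : ℝ → ℝ)
    (hinv : ∀ s ≥ (0:ℝ), 0 ≤ ψinv s ∧ ψ (ψinv s) = s)
    (hinv' : ∀ u ≥ (0:ℝ), ψinv (ψ u) = u) :
    AntitoneOn (fun u => ψinv (u ^ p) / u) (Set.Ioi 0) := by
  intro u hu v hv huv
  simp only [Set.mem_Ioi] at hu hv
  have hp' : p ≠ 0 := hp.ne'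
  have hrpow_inv : ∀ x : ℝ, 0 ≤ x → (x ^ p) ^ (1/p) = x := by
    intro x hx
    rw [← rpow_mul hx, mul_one_div, div_self hp', rpow_one]
  set a := ψinv (u ^ p) with ha_def
  have hup : (0:ℝ) < u ^ p := rpow_pos_of_pos hu p
  have hvp : (0:ℝ) < v ^ p := rpow_pos_of_pos hv p
  obtain ⟨ha0, hψa⟩ := hinv (u ^ p) hup.le
  have ha : 0 < a := by
    rcases ha0.lt_or_eq with h | h
    · exact h
    · exfalso; rw [← h, hψ0] at hψa; exact hup.ne hψa
  set c := v / u with hc_def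
  have hc1 : 1 ≤ c := (one_le_div hu).mpr huv
  have hc0 : 0 < c := lt_of_lt_of_le one_pos hc1
  have hca : c * a = (v / u) * a := rfl
  have hcu : c * u = v := div_mul_cancel₀ v hu.ne'
  -- convexity step: ψ a = (1/c)^p * ψ (c*a)  at points (c*a)^p and 0
  have hkey : v ^ p ≤ ψ (c * a) := by
    have hlam : (0:ℝ) ≤ (1/c) ^ p := rpow_nonneg (by positivity) p
    have hmu : (0:ℝ) ≤ 1 - (1/c) ^ p := by
      have : (1/c) ^ p ≤ 1 ^ p := by
        apply rpow_le_rpow (by positivity) _ hp.le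
        exact div_le_one_of_le₀ hc1 hc0.le
      simpa using this
    have hsum : (1/c) ^ p + (1 - (1/c) ^ p) = 1 := by ring
    have hx : ((c * a) ^ p) ∈ Set.Ici (0:ℝ) := Set.mem_Ici.mpr (rpow_nonneg (by positivity) p)
    have hy : (0:ℝ) ∈ Set.Ici (0:ℝ) := Set.mem_Ici.mpr (le_refl 0)
    have := hconv.2 hx hy hlam hmu hsum
    simp only [smul_eq_mul, mul_zero, add_zero] at this
    have harg : (1/c) ^ p * (c * a) ^ p = a ^ p := by
      rw [← mul_rpow (by positivity) (by positivity)]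
      rw [one_div, inv_mul_cancel_left₀ hc0.ne']
    rw [harg, hrpow_inv a ha0, hrpow_inv (c*a) (by positivity)] at this
    rw [show ((0:ℝ) ^ (1/p)) = 0 from zero_rpow (one_div_ne_zero hp'), hψ0, mul_zero, add_zero,
      hψa] at this
    -- this : u ^ p ≤ (1/c)^p * ψ (c * a)
    have hcp : (0:ℝ) < c ^ p := rpow_pos_of_pos hc0 p
    have : c ^ p * u ^ p ≤ c ^ p * ((1/c) ^ p * ψ (c * a)) :=
      mul_le_mul_of_nonneg_left this hcp.le
    calc v ^ p = (c * u) ^ p := by rw [hcu]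
      _ = c ^ p * u ^ p := mul_rpow hc0.le hu.le
      _ ≤ c ^ p * ((1/c) ^ p * ψ (c * a)) := this
      _ = (c * (1/c)) ^ p * ψ (c * a) := by rw [mul_rpow hc0.le (by positivity), mul_assoc]
      _ = ψ (c * a) := by rw [mul_one_div, div_self hc0.ne', one_rpow, one_mul]
  obtain ⟨hb0, hψb⟩ := hinv (v ^ p) hvp.le
  have hle : ψinv (v ^ p) ≤ c * a := by
    rw [← hmono.le_iff_le (Set.mem_Ici.mpr hb0) (Set.mem_Ici.mpr (by positivity))]
    rw [hψb]; exact hkey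
  show ψinv (v ^ p) / v ≤ a / u
  rw [div_le_div_iff₀ hv hu]
  calc ψinv (v ^ p) * u ≤ (c * a) * u := mul_le_mul_of_nonneg_right hle hu.le
    _ = a * v := by rw [hc_def]; field_simp
end

section
/- Let φ : ℝ≥0 → ℝ≥0 be an Orlicz function satisfying Δ^q for small arguments: φ(au) ≤ K a^q φ(u) whenever a ≥ 1 and au ≤ v, for some K > 0 and v > 0. Define ρ(u) = φ(u) for 0 ≤ u ≤ v and ρ(u) = c u^q + (φ(v) − c v^q) for u > v, where c > 0 is arbitrary. Then ρ is an Orlicz function satisfying Δ^q for all arguments, i.e. there exists K' > 0 with ρ(au) ≤ K' a^q ρ(u) for all a ≥ 1 and u ≥ 0. -/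
open Real
set_option maxHeartbeats 1000000

theorem stmt_15 (φ : ℝ → ℝ) (q : ℝ) (hq : 0 < q)
    (hφ0 : φ 0 = 0) (hmono : StrictMonoOn φ (Set.Ici 0))
    (hcont : ContinuousOn φ (Set.Ici 0))
    (htop : Filter.Tendsto φ Filter.atTop Filter.atTop)
    (K v : ℝ) (hK : 0 < K) (hv : 0 < v)
    (hΔ : ∀ a ≥ (1:ℝ), ∀ u ≥ (0:ℝ), a * u ≤ v → φ (a * u) ≤ K * a ^ q * φ u)
    (c : ℝ) (hc : 0 < c)
    (ρ : ℝ → ℝ)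
    (hρ : ∀ u ≥ (0:ℝ), ρ u = if u ≤ v then φ u else c * u ^ q + (φ v - c * v ^ q)) :
    (ρ 0 = 0 ∧ StrictMonoOn ρ (Set.Ici 0) ∧ ContinuousOn ρ (Set.Ici 0) ∧
      Filter.Tendsto ρ Filter.atTop Filter.atTop) ∧
    (∃ K' > (0:ℝ), ∀ a ≥ (1:ℝ), ∀ u ≥ (0:ℝ), ρ (a * u) ≤ K' * a ^ q * ρ u) := by
  have hφnn : ∀ u : ℝ, 0 ≤ u → 0 ≤ φ u := fun u hu => by
    have := hmono.monotoneOn (Set.mem_Ici.2 le_rfl) (Set.mem_Ici.2 hu) hu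
    linarith [hφ0]
  have hF : 0 < φ v := by
    have := hmono (Set.mem_Ici.2 le_rfl) (Set.mem_Ici.2 hv.le) hv
    linarith [hφ0]
  have hvq : 0 < v ^ q := Real.rpow_pos_of_pos hv q
  set d : ℝ := φ v - c * v ^ q with hd_def
  set D : ℝ := |d| with hD_def
  have hD : 0 ≤ D := abs_nonneg d
  have hdD : d ≤ D := le_abs_self d
  have hdD' : -D ≤ d := neg_abs_le d
  constructor
  · refine ⟨?_, ?_, ?_, ?_⟩
    · rw [hρ 0 le_rfl, if_pos hv.le, hφ0]
    · intro x hx y hy hxy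
      rw [hρ x hx, hρ y hy]
      by_cases hyv : y ≤ v
      · rw [if_pos hyv, if_pos (le_trans hxy.le hyv)]
        exact hmono hx hy hxy
      · rw [if_neg hyv]
        push_neg at hyv
        by_cases hxv : x ≤ v
        · rw [if_pos hxv]
          have h1 : φ x ≤ φ v := hmono.monotoneOn hx (Set.mem_Ici.2 hv.le) hxv
          have h2 : c * v ^ q < c * y ^ q :=
            mul_lt_mul_of_pos_left (Real.rpow_lt_rpow hv.le hyv hq) hc
          linarith
        · rw [if_neg hxv]
          push_neg at hxv
          have h2 : x ^ q < y ^ q :=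
            Real.rpow_lt_rpow (le_trans hv.le hxv.le) hxy hq
          nlinarith
    · have hEq : Set.EqOn ρ
          (fun u => if u ≤ v then φ u else c * u ^ q + (φ v - c * v ^ q)) (Set.Ici 0) :=
        fun u hu => hρ u hu
      set g : ℝ → ℝ := fun u => if u ≤ v then φ u else c * u ^ q + (φ v - c * v ^ q) with hg_def
      have hg1 : ContinuousOn g (Set.Icc 0 v) :=
        (hcont.mono Set.Icc_subset_Ici_self).congr (fun u hu => if_pos hu.2)
      have hg2 : ContinuousOn g (Set.Ici v) := by
        have hr : ContinuousOn (fun u : ℝ => c * u ^ q + (φ v - c * v ^ q)) (Set.Ici v) := by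
          apply ContinuousOn.add _ continuousOn_const
          apply ContinuousOn.mul continuousOn_const
          intro x hx
          exact (Real.continuousAt_rpow_const x q
            (Or.inl (ne_of_gt (lt_of_lt_of_le hv hx)))).continuousWithinAt
        apply hr.congr
        intro u hu
        by_cases h : u ≤ v
        · have huv : u = v := le_antisymm h hu
          subst huv
          simp [hg_def]
        · simp [hg_def, if_neg h]
      have hunion : Set.Ici (0:ℝ) = Set.Icc 0 v ∪ Set.Ici v :=
        (Set.Icc_union_Ici_eq_Ici hv.le).symm
      have hg : ContinuousOn g (Set.Ici 0) := by
        rw [hunion]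
        intro x _
        apply ContinuousWithinAt.union
        · by_cases h : x ∈ Set.Icc 0 v
          · exact hg1 x h
          · exact continuousWithinAt_of_notMem_closure
              (by rwa [IsClosed.closure_eq isClosed_Icc])
        · by_cases h : x ∈ Set.Ici v
          · exact hg2 x h
          · exact continuousWithinAt_of_notMem_closure
              (by rwa [IsClosed.closure_eq isClosed_Ici])
      exact hg.congr hEq
    · have ht : Filter.Tendsto (fun u : ℝ => c * u ^ q + (φ v - c * v ^ q))
          Filter.atTop Filter.atTop := by
        apply Filter.tendsto_atTop_add_const_right
        exact (tendsto_rpow_atTop hq).const_mul_atTop hc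
      apply ht.congr'
      filter_upwards [Filter.eventually_gt_atTop v, Filter.eventually_ge_atTop (0:ℝ)]
        with u h1 h2
      rw [hρ u h2, if_neg (not_le.2 h1)]
  · set G : ℝ := (K + 1) * (φ v + c * v ^ q + 2 * D) with hG_def
    have hG : 0 < G := by positivity
    refine ⟨G / φ v, div_pos hG hF, ?_⟩
    intro a ha u hu
    have ha0 : 0 ≤ a := le_trans zero_le_one ha
    have hau : 0 ≤ a * u := mul_nonneg ha0 hu
    have hA1 : 1 ≤ a ^ q := by
      calc (1:ℝ) = 1 ^ q := (Real.one_rpow q).symm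
      _ ≤ a ^ q := Real.rpow_le_rpow zero_le_one ha hq.le
    have hA0 : 0 ≤ a ^ q := le_trans zero_le_one hA1
    have huq : 0 ≤ u ^ q := Real.rpow_nonneg hu q
    have hmulq : (a * u) ^ q = a ^ q * u ^ q := Real.mul_rpow ha0 hu
    rw [hρ (a * u) hau, hρ u hu]
    by_cases h1 : a * u ≤ v
    · have huv : u ≤ v := le_trans (le_mul_of_one_le_left hu ha) h1
      rw [if_pos h1, if_pos huv]
      have hφu : 0 ≤ φ u := hφnn u hu
      have h2 : φ (a * u) ≤ K * a ^ q * φ u := hΔ a ha u hu h1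
      have h3 : K * φ v ≤ G := by
        nlinarith [mul_nonneg hK.le (mul_nonneg hc.le hvq.le), mul_nonneg hK.le hD,
          mul_nonneg hc.le hvq.le]
      have h4 : K ≤ G / φ v := (le_div_iff₀ hF).2 h3
      calc φ (a * u) ≤ K * a ^ q * φ u := h2
        _ ≤ G / φ v * a ^ q * φ u :=
          mul_le_mul_of_nonneg_right (mul_le_mul_of_nonneg_right h4 hA0) hφu
    · rw [if_neg h1]
      push_neg at h1
      have key : (c * (a * u) ^ q + (φ v - c * v ^ q)) * φ v ≤
          G * (a ^ q * (if u ≤ v then φ u else c * u ^ q + (φ v - c * v ^ q))) := by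
        by_cases h2 : u ≤ v
        · rw [if_pos h2]
          have hu0 : 0 < u := by
            rcases hu.lt_or_eq with h | h
            · exact h
            · exfalso; rw [← h, mul_zero] at h1; linarith
          have huq0 : 0 < u ^ q := Real.rpow_pos_of_pos hu0 q
          have hφu : 0 ≤ φ u := hφnn u hu
          have hvu1 : 1 ≤ v / u := (one_le_div hu0).2 h2
          have hvumul : (v / u) * u = v := div_mul_cancel₀ v (ne_of_gt hu0)
          have key0 := hΔ (v / u) hvu1 u hu (by rw [hvumul])
          rw [hvumul] at key0
          have hdivq : (v / u) ^ q = v ^ q / u ^ q := Real.div_rpow hv.le hu0.le q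
          rw [hdivq] at key0
          -- key0 : φ v ≤ K * (v ^ q / u ^ q) * φ u
          have key' : u ^ q * φ v ≤ K * v ^ q * φ u := by
            have h := mul_le_mul_of_nonneg_left key0 huq0.le
            calc u ^ q * φ v ≤ u ^ q * (K * (v ^ q / u ^ q) * φ u) := h
              _ = K * v ^ q * φ u := by
                field_simp
          have h1' : v ^ q ≤ a ^ q * u ^ q := by
            rw [← hmulq]
            exact Real.rpow_le_rpow hv.le h1.le hq.le
          -- F ≤ K * a^q * φ u
          have hFb : φ v ≤ K * a ^ q * φ u := by
            have h4 : a ^ q * (u ^ q * φ v) ≤ a ^ q * (K * v ^ q * φ u) :=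
              mul_le_mul_of_nonneg_left key' hA0
            have h5 : v ^ q * φ v ≤ v ^ q * (K * a ^ q * φ u) := by nlinarith
            exact le_of_mul_le_mul_left h5 hvq
          rw [hmulq]
          have t1 : c * a ^ q * (u ^ q * φ v) ≤ c * a ^ q * (K * v ^ q * φ u) :=
            mul_le_mul_of_nonneg_left key' (by positivity)
          have t2 : D * φ v ≤ D * (K * a ^ q * φ u) :=
            mul_le_mul_of_nonneg_left hFb hD
          have t3 : (φ v - c * v ^ q) * φ v ≤ D * φ v :=
            mul_le_mul_of_nonneg_right hdD hF.le
          have t4 : K * (c * v ^ q + D) ≤ (K + 1) * (φ v + c * v ^ q + 2 * D) := by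
            nlinarith [mul_nonneg hc.le hvq.le, mul_nonneg hK.le hD]
          have t5 : K * (c * v ^ q + D) * (a ^ q * φ u) ≤ G * (a ^ q * φ u) :=
            mul_le_mul_of_nonneg_right t4 (mul_nonneg hA0 hφu)
          nlinarith [t1, t2, t3, t5]
        · rw [if_neg h2]
          push_neg at h2
          have hUV : v ^ q ≤ u ^ q := Real.rpow_le_rpow hv.le h2.le hq.le
          have hcUV : c * v ^ q ≤ c * u ^ q := mul_le_mul_of_nonneg_left hUV hc.le
          have hR : φ v ≤ c * u ^ q + (φ v - c * v ^ q) := by linarith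
          have hR0 : 0 ≤ c * u ^ q + (φ v - c * v ^ q) := le_trans hF.le hR
          rw [hmulq]
          have e0 : c * u ^ q ≤ (c * u ^ q + (φ v - c * v ^ q)) + D := by linarith
          have e1 : (a ^ q * (c * u ^ q)) * φ v ≤
              (a ^ q * ((c * u ^ q + (φ v - c * v ^ q)) + D)) * φ v :=
            mul_le_mul_of_nonneg_right (mul_le_mul_of_nonneg_left e0 hA0) hF.le
          have e2 : (a ^ q * D) * φ v ≤ (a ^ q * D) * (c * u ^ q + (φ v - c * v ^ q)) :=
            mul_le_mul_of_nonneg_left hR (mul_nonneg hA0 hD)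
          have e3 : (φ v - c * v ^ q) * φ v ≤ D * φ v :=
            mul_le_mul_of_nonneg_right hdD hF.le
          have e4 : D * φ v ≤ D * (c * u ^ q + (φ v - c * v ^ q)) :=
            mul_le_mul_of_nonneg_left hR hD
          have e5 : D * (c * u ^ q + (φ v - c * v ^ q)) ≤
              a ^ q * (D * (c * u ^ q + (φ v - c * v ^ q))) :=
            le_mul_of_one_le_left (mul_nonneg hD hR0) hA1
          have e6 : (φ v + 2 * D) * (a ^ q * (c * u ^ q + (φ v - c * v ^ q))) ≤
              G * (a ^ q * (c * u ^ q + (φ v - c * v ^ q))) := by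
            apply mul_le_mul_of_nonneg_right _ (mul_nonneg hA0 hR0)
            nlinarith [mul_nonneg hc.le hvq.le, mul_nonneg hK.le hF.le,
              mul_nonneg hK.le hD, mul_nonneg hK.le (mul_nonneg hc.le hvq.le)]
          nlinarith [e1, e2, e3, e4, e5, e6]
      have hgoal : G / φ v * a ^ q *
          (if u ≤ v then φ u else c * u ^ q + (φ v - c * v ^ q)) =
          G * (a ^ q * (if u ≤ v then φ u else c * u ^ q + (φ v - c * v ^ q))) / φ v := by
        ring
      rw [hgoal, le_div_iff₀ hF]
      exact key
end

section
/- Let q ≥ 2 and define φ(0)=0, φ(u) = u^q/|ln u| for 0 < u ≤ 1/e, and φ(u) = (1/q + 1)u^q − (1/q)e^{-q} for u > 1/e. Then φ does not satisfy condition Δ^q for small arguments: sup over λ ≥ 1 and u > 0 with λu ≤ 1/e of φ(λu)/(λ^q φ(u)) is infinite. -/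
open Real

theorem stmt_16 (q : ℝ) (hq : 2 ≤ q) (φ : ℝ → ℝ)
    (hφ0 : φ 0 = 0)
    (hφ1 : ∀ u : ℝ, 0 < u → u ≤ Real.exp (-1) → φ u = u ^ q / |Real.log u|)
    (hφ2 : ∀ u : ℝ, Real.exp (-1) < u → φ u = (1 / q + 1) * u ^ q - (1 / q) * Real.exp (-q)) :
    ∀ K > (0:ℝ), ∃ l u : ℝ, 1 ≤ l ∧ 0 < u ∧ l * u ≤ Real.exp (-1) ∧
      K * l ^ q * φ u < φ (l * u) := by
  intro K hK
  refine ⟨Real.exp K, Real.exp (-(K+1)), ?_, Real.exp_pos _, ?_, ?_⟩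
  · exact Real.one_le_exp hK.le
  · rw [← Real.exp_add]
    apply le_of_eq
    ring_nf
  have hmul : Real.exp K * Real.exp (-(K+1)) = Real.exp (-1) := by
    rw [← Real.exp_add]; ring_nf
  rw [hmul]
  have e1 : φ (Real.exp (-1)) = Real.exp (-1) ^ q / 1 := by
    rw [hφ1 _ (Real.exp_pos _) le_rfl, Real.log_exp]
    norm_num
  have e2 : φ (Real.exp (-(K+1))) = Real.exp (-(K+1)) ^ q / (K+1) := by
    rw [hφ1 _ (Real.exp_pos _) (Real.exp_le_exp.2 (by linarith)), Real.log_exp,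
      abs_of_nonpos (by linarith)]
    ring_nf
  rw [e1, e2]
  have hr : ∀ a : ℝ, Real.exp a ^ q = Real.exp (a * q) := fun a => by
    rw [Real.rpow_def_of_pos (Real.exp_pos a), Real.log_exp]
  rw [hr, hr, hr]
  have key : Real.exp (K * q) * Real.exp (-(K+1) * q) = Real.exp (-1 * q) := by
    rw [← Real.exp_add]; ring_nf
  have hpos : (0:ℝ) < Real.exp (-1 * q) := Real.exp_pos _
  calc K * Real.exp (K * q) * (Real.exp (-(K+1) * q) / (K+1))
      = (K / (K+1)) * Real.exp (-1*q) := by rw [← key]; field_simp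
    _ < 1 * Real.exp (-1*q) := by
        apply mul_lt_mul_of_pos_right _ hpos
        rw [div_lt_one (by linarith)]; linarith
    _ = Real.exp (-1 * q) / 1 := by ring
end
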